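/- Let d ≥ 1, let ι be a nonempty finite index type, let c : ι → ℝ with c α > 0 for all α, and let a, b : ι → EuclideanSpace ℝ (Fin d) with ‖a α‖ = 1 and ‖b α‖ = 1 for all α. Let λ, μ ∈ ℝ with μ > 0 and λ + μ > 0, and set ν := λ/(2(λ + μ)). Define A : Matrix (Fin d) (Fin d) ℝ by A k l := −∑_{α} c α · (a α) k · (b α) l, assume A is symmetric (A = Aᵀ), set γ := −∑_{α} c α · ⟪a α, b α⟫, and set K := (λ + μ) • A + (μ·γ) • (1 : Matrix (Fin d) (Fin d) ℝ). If −⟪a α, b α⟫ > 1/(3 − 4ν) for every α ∈ ι, then K is positive-definite. -/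

import Mathlib

/-!
Write the quadratic form of `K` as `ξᵀ K ξ = ∑ α c α · S_α(ξ)` with
`S_α(ξ) = -(λ + μ) ⟪a, ξ⟫⟪b, ξ⟫ + μ κ ‖ξ‖²`, where `κ = -⟪a, b⟫ = cos θ^α`. Since
`4 ⟪a, ξ⟫⟪b, ξ⟫ ≤ ⟪a + b, ξ⟫² ≤ ‖a + b‖² ‖ξ‖² = 2 (1 - κ) ‖ξ‖²`, each term satisfies
`2 S_α(ξ) ≥ (κ (λ + 3μ) - (λ + μ)) ‖ξ‖²`, and `κ > 1 / (3 - 4ν) = (λ + μ) / (λ + 3μ)` makes this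
positive.
-/

open RealInnerProductSpace Matrix

section InnerProduct

variable {E : Type*} [NormedAddCommGroup E] [InnerProductSpace ℝ E]

theorem four_mul_inner_mul_inner_le (u v x : E) :
    4 * (⟪u, x⟫ * ⟪v, x⟫) ≤ ‖u + v‖ ^ 2 * ‖x‖ ^ 2 := by
  have hCS : ⟪u + v, x⟫ ^ 2 ≤ (‖u + v‖ * ‖x‖) ^ 2 :=
    sq_le_sq' (neg_le_of_abs_le (abs_real_inner_le_norm _ _)) (real_inner_le_norm _ _)
  rw [inner_add_left] at hCS
  nlinarith [sq_nonneg (⟪u, x⟫ - ⟪v, x⟫)]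

def springForm (lam mu : ℝ) (u v x : E) : ℝ :=
  -(lam + mu) * (⟪u, x⟫ * ⟪v, x⟫) - mu * ⟪u, v⟫ * ‖x‖ ^ 2

theorem springForm_pos {lam mu : ℝ} (hlm : 0 ≤ lam + mu) {u v x : E} (hu : ‖u‖ = 1)
    (hv : ‖v‖ = 1) (hx : x ≠ 0) (hangle : lam + mu < -⟪u, v⟫ * (lam + 3 * mu)) :
    0 < springForm lam mu u v x := by
  have hCS := four_mul_inner_mul_inner_le u v x
  rw [norm_add_sq_real, hu, hv] at hCS
  have hx2 : 0 < ‖x‖ ^ 2 := by positivity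
  unfold springForm
  nlinarith [mul_le_mul_of_nonneg_left hCS hlm, mul_lt_mul_of_pos_right hangle hx2]

end InnerProduct

theorem three_sub_four_mul_poisson {lam mu : ℝ} (hlm : lam + mu ≠ 0) :
    3 - 4 * (lam / (2 * (lam + mu))) = (lam + 3 * mu) / (lam + mu) := by
  field_simp
  ring

section Matrix

variable {n ι : Type*} [Fintype n] [Fintype ι]

theorem dotProduct_mulVec_eq_neg_sum_inner_mul_inner {c : ι → ℝ} {a b : ι → EuclideanSpace ℝ n}
    {A : Matrix n n ℝ} (hA : ∀ k l, A k l = -∑ α, c α * a α k * b α l)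
    (x : EuclideanSpace ℝ n) :
    x.ofLp ⬝ᵥ (A *ᵥ x.ofLp) = -∑ α, c α * (⟪a α, x⟫ * ⟪b α, x⟫) := by
  have hA' : A = -∑ α, c α • vecMulVec (a α).ofLp (b α).ofLp := by
    ext k l
    simp [hA, vecMulVec_apply, Matrix.sum_apply, mul_assoc]
  rw [hA']
  simp only [neg_mulVec, sum_mulVec, smul_mulVec, vecMulVec_mulVec, op_smul_eq_smul,
    dotProduct_neg, dotProduct_sum, dotProduct_smul, smul_eq_mul,
    EuclideanSpace.inner_eq_star_dotProduct, star_trivial, neg_inj]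
  exact Finset.sum_congr rfl fun α _ => by rw [dotProduct_comm (b α).ofLp]; ring

theorem dotProduct_mulVec_eq_sum_springForm [DecidableEq n] {c : ι → ℝ}
    {a b : ι → EuclideanSpace ℝ n} {A : Matrix n n ℝ}
    (hA : ∀ k l, A k l = -∑ α, c α * a α k * b α l) (lam mu : ℝ) (x : EuclideanSpace ℝ n) :
    x.ofLp ⬝ᵥ (((lam + mu) • A + (mu * -∑ α, c α * ⟪a α, b α⟫) • 1) *ᵥ x.ofLp) =
      ∑ α, c α * springForm lam mu (a α) (b α) x := by
  have hx : x.ofLp ⬝ᵥ x.ofLp = ‖x‖ ^ 2 := by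
    rw [← real_inner_self_eq_norm_sq, EuclideanSpace.inner_eq_star_dotProduct, star_trivial]
  rw [add_mulVec, smul_mulVec, smul_mulVec, one_mulVec, dotProduct_add, dotProduct_smul,
    dotProduct_smul, smul_eq_mul, smul_eq_mul, hx, dotProduct_mulVec_eq_neg_sum_inner_mul_inner hA,
    ← Finset.sum_neg_distrib, ← Finset.sum_neg_distrib, Finset.mul_sum, Finset.mul_sum,
    Finset.sum_mul, ← Finset.sum_add_distrib]
  exact Finset.sum_congr rfl fun α _ => by rw [springForm]; ring

end Matrix

theorem stmt_11_general (d : ℕ) {ι : Type*} [Fintype ι] [Nonempty ι]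
    (c : ι → ℝ) (hc : ∀ α, 0 < c α)
    (a b : ι → EuclideanSpace ℝ (Fin d))
    (ha : ∀ α, ‖a α‖ = 1) (hb : ∀ α, ‖b α‖ = 1)
    (lam mu : ℝ) (hmu : 0 < mu) (hlm : 0 < lam + mu)
    (ν : ℝ) (hν : ν = lam / (2 * (lam + mu)))
    (A : Matrix (Fin d) (Fin d) ℝ)
    (hA : ∀ k l : Fin d, A k l = -∑ α, c α * (a α) k * (b α) l)
    (hAsym : A = Aᵀ)
    (γ : ℝ) (hγ : γ = -∑ α, c α * ⟪a α, b α⟫)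
    (K : Matrix (Fin d) (Fin d) ℝ)
    (hK : K = (lam + mu) • A + (mu * γ) • (1 : Matrix (Fin d) (Fin d) ℝ))
    (hangle : ∀ α, -⟪a α, b α⟫ > 1 / (3 - 4 * ν)) :
    K.PosDef := by
  have hangle' (α : ι) : lam + mu < -⟪a α, b α⟫ * (lam + 3 * mu) := by
    have h := hangle α
    rwa [hν, three_sub_four_mul_poisson hlm.ne', one_div_div, gt_iff_lt,
      div_lt_iff₀ (by linarith)] at h
  rw [posDef_iff_dotProduct_mulVec]
  refine ⟨isHermitian_iff_isSymm.mpr ?_, fun x hx => ?_⟩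
  · rw [hK]
    exact (IsSymm.smul hAsym.symm _).add (isSymm_one.smul _)
  · rw [star_trivial, hK, hγ, ← WithLp.ofLp_toLp 2 x, dotProduct_mulVec_eq_sum_springForm hA]
    refine Finset.sum_pos (fun α _ => mul_pos (hc α) ?_) Finset.univ_nonempty
    exact springForm_pos hlm.le (ha α) (hb α) (by simpa using hx) (hangle' α)

theorem stmt_11 (d : ℕ) (hd : 1 ≤ d) {ι : Type*} [Fintype ι] [Nonempty ι]
    (c : ι → ℝ) (hc : ∀ α, 0 < c α)
    (a b : ι → EuclideanSpace ℝ (Fin d))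
    (ha : ∀ α, ‖a α‖ = 1) (hb : ∀ α, ‖b α‖ = 1)
    (lam mu : ℝ) (hmu : 0 < mu) (hlm : 0 < lam + mu)
    (ν : ℝ) (hν : ν = lam / (2 * (lam + mu)))
    (A : Matrix (Fin d) (Fin d) ℝ)
    (hA : ∀ k l : Fin d, A k l = -∑ α, c α * (a α) k * (b α) l)
    (hAsym : A = Aᵀ)
    (γ : ℝ) (hγ : γ = -∑ α, c α * ⟪a α, b α⟫)
    (K : Matrix (Fin d) (Fin d) ℝ)
    (hK : K = (lam + mu) • A + (mu * γ) • (1 : Matrix (Fin d) (Fin d) ℝ))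
    (hangle : ∀ α, -⟪a α, b α⟫ > 1 / (3 - 4 * ν)) :
    K.PosDef :=
  stmt_11_general d c hc a b ha hb lam mu hmu hlm ν hν A hA hAsym γ hγ K hK hangle
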